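/- arXiv:1812.07133 — 6 statements merged into one kernel-verified Lean document; each statement's English description precedes it below -/
import Mathlib

section
/- Let A be a unital associative (not necessarily commutative) algebra over a characteristic-zero field (more generally, a ℚ-algebra). For all a_1, …, a_m ∈ A and every k ∈ ℕ, (a_1 + a_2 + ⋯ + a_m)^k = Σ_{α ∈ ℕ^m, |α| = k} (k!/α!) · a^α, where a^α = a_1^{α_1} × a_2^{α_2} × ⋯ × a_m^{α_m} is the symmetrized product, α! = α_1!⋯α_m! and |α| = α_1 + ⋯ + α_m. -/
/-- The symmetrized product of a list of elements of an algebra `A`: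
`(1/N!) ∑_{σ ∈ S_N} a_{σ(1)} ⋯ a_{σ(N)}`. -/
noncomputable def symProd (𝕜 : Type*) {A : Type*} [Field 𝕜] [Ring A] [Algebra 𝕜 A]
    (l : List A) : A :=
  (l.length.factorial : 𝕜)⁻¹ •
    ∑ σ : Equiv.Perm (Fin l.length), (List.ofFn fun i => l.get (σ i)).prod

/-- `symPow 𝕜 a α` is the symmetrized product `a_1^{α_1} × ⋯ × a_m^{α_m}`,
i.e. the symmetrized product of `α i` copies of `a i` for each `i`. -/
noncomputable def symPow (𝕜 : Type*) {A : Type*} [Field 𝕜] [Ring A] [Algebra 𝕜 A]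
    {m : ℕ} (a : Fin m → A) (α : Fin m → ℕ) : A :=
  symProd 𝕜 ((List.finRange m).flatMap fun i => List.replicate (α i) (a i))

/-!
Expanding the power gives the sum of all words `a_{f 1} ⋯ a_{f k}` over `f : Fin k → Fin m`;
group them by their content `α i = #(f⁻¹ i)`. The words of content `α` form a single orbit of
`S_k` acting by permuting positions, and the stabilizer of each has order `α! = ∏ (α i)!`.
Hence, for any `u` of content `α`, summing the word of `u ∘ σ` over all `σ ∈ S_k` hits every
word of content `α` exactly `α!` times, i.e. `k! • a^α = α! • ∑_{content f = α} word f`.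
-/

open Finset
open scoped Nat

section FiberCard

variable {α ι : Type*} [Fintype α] [DecidableEq ι]

def fiberCard (f : α → ι) (i : ι) : ℕ := #{a | f a = i}

lemma fiberCard_comp_perm (f : α → ι) (σ : Equiv.Perm α) :
    fiberCard (f ∘ σ) = fiberCard f :=
  funext fun _ => card_equiv σ (by simp)

lemma sum_fiberCard [Fintype ι] (f : α → ι) : ∑ i, fiberCard f i = Fintype.card α :=
  (card_eq_sum_card_fiberwise fun a _ => mem_univ (f a)).symm

lemma exists_perm_comp_eq_of_fiberCard_eq {u v : α → ι} (h : fiberCard v = fiberCard u) :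
    ∃ σ : Equiv.Perm α, u ∘ σ = v :=
  ⟨Equiv.ofFiberEquiv fun i => Fintype.equivOfCardEq <| by
      simpa only [fiberCard, Fintype.card_subtype] using congrFun h i,
    funext (Equiv.ofFiberEquiv_map _)⟩

variable [DecidableEq α] [Fintype ι]

lemma card_perm_comp_eq {u v : α → ι} {τ : Equiv.Perm α} (hτ : u ∘ τ = v) :
    #{σ : Equiv.Perm α | u ∘ σ = v} = ∏ i, (fiberCard u i)! := by
  subst hτ
  have hstab : #{σ : Equiv.Perm α | u ∘ σ = u ∘ τ} = #{ρ : Equiv.Perm α | u ∘ ρ = u} :=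
    card_equiv (Equiv.mulRight τ⁻¹) fun σ => by
      simp only [mem_filter, mem_univ, true_and, Equiv.coe_mulRight, Equiv.Perm.coe_mul]
      rw [Equiv.Perm.inv_def, ← Function.comp_assoc, Equiv.comp_symm_eq]
  rw [hstab, ← Fintype.card_subtype, DomMulAct.stabilizer_card]
  simp only [fiberCard, Fintype.card_subtype]

lemma sum_perm_comp {M : Type*} [AddCommMonoid M] (u : α → ι) (F : (α → ι) → M) :
    ∑ σ : Equiv.Perm α, F (u ∘ σ) =
      (∏ i, (fiberCard u i)!) • ∑ v with fiberCard v = fiberCard u, F v := by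
  have himage : univ.image (fun σ : Equiv.Perm α => u ∘ σ) =
      ({v | fiberCard v = fiberCard u} : Finset (α → ι)) := by
    ext v
    simp only [mem_image, mem_univ, true_and, mem_filter]
    constructor
    · rintro ⟨σ, rfl⟩
      exact fiberCard_comp_perm u σ
    · exact exists_perm_comp_eq_of_fiberCard_eq
  rw [sum_comp F, himage, smul_sum]
  refine sum_congr rfl fun v hv => ?_
  obtain ⟨τ, hτ⟩ := exists_perm_comp_eq_of_fiberCard_eq (mem_filter.1 hv).2
  rw [card_perm_comp_eq hτ]

end FiberCard

lemma count_ofFn_eq_fiberCard {ι : Type*} [DecidableEq ι] {k : ℕ} (f : Fin k → ι) (i : ι) :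
    (List.ofFn f).count i = fiberCard f i := by
  rw [← Multiset.coe_count, ← Fin.univ_val_map, Multiset.count_map]
  simp only [fiberCard, card, eq_comm, filter_val]

lemma List.exists_ofFn_eq {β : Type*} {k : ℕ} (l : List β) (h : l.length = k) :
    ∃ f : Fin k → β, List.ofFn f = l := by
  subst h
  exact ⟨l.get, List.ofFn_get l⟩

lemma sum_pow_eq_sum_prod_ofFn {ι A : Type*} [Fintype ι] [Semiring A] (a : ι → A) (k : ℕ) :
    (∑ i, a i) ^ k = ∑ f : Fin k → ι, (List.ofFn (a ∘ f)).prod := by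
  induction k with
  | zero => simp
  | succ n ih =>
    rw [pow_succ', ih, sum_mul_sum, ← Fintype.sum_prod_type']
    refine Fintype.sum_equiv (Fin.consEquiv fun _ => ι) _ _ fun p => ?_
    simp [List.ofFn_succ, Fin.consEquiv, Function.comp_def]

def multiplicityList {m : ℕ} (α : Fin m → ℕ) : List (Fin m) :=
  (List.finRange m).flatMap fun i => List.replicate (α i) i

lemma length_multiplicityList {m : ℕ} (α : Fin m → ℕ) :
    (multiplicityList α).length = ∑ i, α i := by
  simp [multiplicityList, List.length_flatMap, Fin.sum_univ_def]

lemma count_multiplicityList {m : ℕ} (α : Fin m → ℕ) (i : Fin m) :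
    (multiplicityList α).count i = α i := by
  simp [multiplicityList, List.count_flatMap, Function.comp_def, List.count_replicate,
    ← Fin.sum_univ_def]

section SymmetrizedProduct

variable {𝕜 A : Type*} [Field 𝕜] [Ring A] [Algebra 𝕜 A]

lemma symPow_eq_symProd_map {m : ℕ} (a : Fin m → A) (α : Fin m → ℕ) :
    symPow 𝕜 a α = symProd 𝕜 ((multiplicityList α).map a) := by
  simp [symPow, multiplicityList, List.map_flatMap, List.map_replicate]

lemma symProd_ofFn {n : ℕ} (g : Fin n → A) :
    symProd 𝕜 (List.ofFn g) =
      (n ! : 𝕜)⁻¹ • ∑ σ : Equiv.Perm (Fin n), (List.ofFn (g ∘ σ)).prod := by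
  have h : (List.ofFn g).length = n := List.length_ofFn
  unfold symProd
  congr 1
  · rw [h]
  · exact Fintype.sum_equiv (finCongr h).permCongr _ _ fun σ => by
      simp only [List.length_ofFn, List.get_eq_getElem, List.getElem_ofFn, Function.comp_def,
        Equiv.permCongr_apply, finCongr_symm, finCongr_apply]
      rfl

lemma symPow_eq_smul_sum_fiberCard {m k : ℕ} (a : Fin m → A) {α : Fin m → ℕ}
    (hα : ∑ i, α i = k) :
    symPow 𝕜 a α = ((k ! : 𝕜)⁻¹ * ∏ i, ((α i)! : 𝕜)) •
      ∑ f : Fin k → Fin m with fiberCard f = α, (List.ofFn (a ∘ f)).prod := by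
  obtain ⟨u, hu⟩ :=
    (multiplicityList α).exists_ofFn_eq ((length_multiplicityList α).trans hα)
  have hfiber : fiberCard u = α :=
    funext fun i => by rw [← count_ofFn_eq_fiberCard, hu, count_multiplicityList]
  rw [symPow_eq_symProd_map, ← hu, List.map_ofFn, symProd_ofFn, mul_smul, ← hfiber,
    ← Nat.cast_prod, Nat.cast_smul_eq_nsmul]
  exact congrArg _ (sum_perm_comp u fun f => (List.ofFn (a ∘ f)).prod)

end SymmetrizedProduct

/-- Multinomial expansion via symmetrized products in a (noncommutative) ℚ-algebra:
`(a_1 + ⋯ + a_m)^k = ∑_{|α| = k} (k!/α!) a^α`. -/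
theorem stmt0 {A : Type*} [Ring A] [Algebra ℚ A] {m : ℕ} (a : Fin m → A) (k : ℕ) :
    (∑ i, a i) ^ k =
      ∑ α ∈ (Fintype.piFinset fun _ : Fin m => Finset.range (k + 1)).filter
          (fun α => ∑ i, α i = k),
        ((k.factorial : ℚ) / ∏ i, ((α i).factorial : ℚ)) • symPow ℚ a α := by
  have hmem (f : Fin k → Fin m) : fiberCard f ∈ (Fintype.piFinset fun _ : Fin m =>
      Finset.range (k + 1)).filter (fun α => ∑ i, α i = k) := by
    have hsum : ∑ i, fiberCard f i = k := by rw [sum_fiberCard, Fintype.card_fin]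
    refine mem_filter.2 ⟨Fintype.mem_piFinset.2 fun i => mem_range_succ_iff.2 ?_, hsum⟩
    exact (single_le_sum (fun _ _ => Nat.zero_le _) (mem_univ i)).trans_eq hsum
  rw [sum_pow_eq_sum_prod_ofFn, ← sum_fiberwise_of_maps_to fun f _ => hmem f]
  refine sum_congr rfl fun α hα => ?_
  have hfact (n : ℕ) : (n ! : ℚ) ≠ 0 := Nat.cast_ne_zero.2 n.factorial_ne_zero
  have hcoeff :
      ((k ! : ℚ) / ∏ i, ((α i)! : ℚ)) * ((k ! : ℚ)⁻¹ * ∏ i, ((α i)! : ℚ)) = 1 := by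
    field_simp [hfact, prod_ne_zero_iff.2 fun i _ => hfact (α i)]
  rw [symPow_eq_smul_sum_fiberCard a (mem_filter.1 hα).2, smul_smul, hcoeff,
    one_smul]
end

section
/- Let Ω ⊆ 𝕂^{m+1} be an open convex set and let f : Ω → A be continuously differentiable with Df = 0 on Ω. Then for all v, w ∈ Ω, f(v) − f(w) = Σ_{k=1}^m (ζ_k(v) − ζ_k(w)) · ∫_0^1 (∂f/∂v_k)(t v + (1−t) w) dt, where the integral is the Bochner/Riemann integral of the A-valued function t ↦ (∂f/∂v_k)(t v + (1−t) w) on [0,1]. -/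
/-!
With `γ t = t • v + (1 - t) • w`, the fundamental theorem of calculus gives
`f v - f w = ∫₀¹ f'(γ t) (v - w) dt`. The Cauchy–Fueter equation at `γ t` expresses the
derivative in the direction `v₀` through those in the directions `v_k`, which turns
`f'(γ t) (v - w)` into `∑ₖ (ζₖ(v) - ζₖ(w)) · ∂ₖ f(γ t)`; the constant left factors then
leave the integral.
-/

/-- The Fueter variable `ζ_k(v) = v_k·1 − v_0·e_k` associated with the generators `e`. -/
def zeta {𝕜 A : Type*} [CommRing 𝕜] [Ring A] [Algebra 𝕜 A] {m : ℕ}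
    (e : Fin m → A) (k : Fin m) (v : Fin (m + 1) → 𝕜) : A :=
  v k.succ • (1 : A) - v 0 • e k

open Set intervalIntegral

theorem LinearMap.map_sub_eq_sum_zeta_sub_mul {𝕜 A : Type*} [CommRing 𝕜] [Ring A]
    [Algebra 𝕜 A] {m : ℕ} (e : Fin m → A) (L : (Fin (m + 1) → 𝕜) →ₗ[𝕜] A)
    (hD : L (Pi.single 0 1) + ∑ k : Fin m, e k * L (Pi.single k.succ 1) = 0)
    (v w : Fin (m + 1) → 𝕜) :
    L (v - w) = ∑ k : Fin m, (zeta e k v - zeta e k w) * L (Pi.single k.succ 1) := by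
  have hL : ∀ u, L u = ∑ j, u j • L (Pi.single j 1) := fun u => by
    simp only [← map_smul, ← map_sum, ← Pi.single_smul', smul_eq_mul, mul_one,
      Finset.univ_sum_single]
  rw [hL, Fin.sum_univ_succ, eq_neg_of_add_eq_zero_left hD, smul_neg, Finset.smul_sum,
    neg_add_eq_sub, ← Finset.sum_sub_distrib]
  refine Finset.sum_congr rfl fun k _ => ?_
  simp only [zeta, sub_sub_sub_comm, ← sub_smul, Pi.sub_apply, sub_mul, smul_mul_assoc,
    one_mul]

theorem Convex.smul_add_one_sub_smul_mem {E : Type*} [AddCommGroup E] [Module ℝ E]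
    {Ω : Set E} (hconv : Convex ℝ Ω) {v w : E} (hv : v ∈ Ω) (hw : w ∈ Ω) {t : ℝ}
    (ht : t ∈ uIcc 0 1) : t • v + (1 - t) • w ∈ Ω := by
  rw [uIcc_of_le zero_le_one] at ht
  exact hconv hv hw ht.1 (by linarith [ht.2]) (by ring)

namespace ContDiffOn

variable {𝕜 E F : Type*} [RCLike 𝕜] [NormedAddCommGroup E] [NormedSpace 𝕜 E]
  [NormedSpace ℝ E] [NormedAddCommGroup F] [NormedSpace 𝕜 F] {f : E → F} {Ω : Set E} {v w : E}

theorem continuousOn_fderiv_segment (hf : ContDiffOn 𝕜 1 f Ω) (hΩ : IsOpen Ω)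
    (hconv : Convex ℝ Ω) (hv : v ∈ Ω) (hw : w ∈ Ω) :
    ContinuousOn (fun t : ℝ => fderiv 𝕜 f (t • v + (1 - t) • w)) (uIcc 0 1) :=
  (hf.continuousOn_fderiv_of_isOpen hΩ le_rfl).comp (by fun_prop)
    fun _ ht => hconv.smul_add_one_sub_smul_mem hv hw ht

theorem intervalIntegrable_fderiv_segment_apply (hf : ContDiffOn 𝕜 1 f Ω) (hΩ : IsOpen Ω)
    (hconv : Convex ℝ Ω) (hv : v ∈ Ω) (hw : w ∈ Ω) (u : E) :
    IntervalIntegrable (fun t : ℝ => fderiv 𝕜 f (t • v + (1 - t) • w) u)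
      MeasureTheory.volume 0 1 :=
  ((hf.continuousOn_fderiv_segment hΩ hconv hv hw).clm_apply
    continuousOn_const).intervalIntegrable

theorem sub_eq_integral_fderiv_segment [IsScalarTower ℝ 𝕜 E] [NormedSpace ℝ F]
    [IsScalarTower ℝ 𝕜 F] [CompleteSpace F] (hf : ContDiffOn 𝕜 1 f Ω) (hΩ : IsOpen Ω)
    (hconv : Convex ℝ Ω) (hv : v ∈ Ω) (hw : w ∈ Ω) :
    f v - f w = ∫ t in (0 : ℝ)..1, fderiv 𝕜 f (t • v + (1 - t) • w) (v - w) := by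
  have hderiv : ∀ t ∈ uIcc (0 : ℝ) 1, HasDerivAt (fun t : ℝ => f (t • v + (1 - t) • w))
      (fderiv 𝕜 f (t • v + (1 - t) • w) (v - w)) t := by
    intro t ht
    have hx := hconv.smul_add_one_sub_smul_mem hv hw ht
    have hfx : HasFDerivAt f (fderiv 𝕜 f _) _ :=
      ((hf.differentiableOn one_ne_zero _ hx).differentiableAt (hΩ.mem_nhds hx)).hasFDerivAt
    have hγ : HasDerivAt (fun t : ℝ => t • v + (1 - t) • w) (v - w) t := by
      simpa [sub_eq_add_neg] using
        ((hasDerivAt_id t).smul_const v).fun_add (((hasDerivAt_id t).const_sub 1).smul_const w)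
    exact (hfx.restrictScalars ℝ).comp_hasDerivAt t hγ
  rw [integral_eq_sub_of_hasDerivAt hderiv
    (hf.intervalIntegrable_fderiv_segment_apply hΩ hconv hv hw _)]
  simp

end ContDiffOn

/-- Fundamental integral representation: if `f` is `C¹` on an open convex set `Ω` and
`Df = 0` on `Ω` (Cauchy–Fueter operator), then
`f(v) − f(w) = ∑_k (ζ_k(v) − ζ_k(w)) ∫_0^1 ∂f/∂v_k(t v + (1−t) w) dt`. -/
theorem stmt2 {𝕜 A : Type*} [RCLike 𝕜] [NormedRing A] [NormedAlgebra 𝕜 A]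
    [NormedAlgebra ℝ A] [IsScalarTower ℝ 𝕜 A] [CompleteSpace A] {m : ℕ}
    (e : Fin m → A) (Ω : Set (Fin (m + 1) → 𝕜)) (hΩ : IsOpen Ω) (hconv : Convex ℝ Ω)
    (f : (Fin (m + 1) → 𝕜) → A) (hf : ContDiffOn 𝕜 1 f Ω)
    (hD : ∀ v ∈ Ω,
      fderiv 𝕜 f v (Pi.single 0 1) +
        ∑ k : Fin m, e k * fderiv 𝕜 f v (Pi.single k.succ 1) = 0)
    (v w : Fin (m + 1) → 𝕜) (hv : v ∈ Ω) (hw : w ∈ Ω) :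
    f v - f w = ∑ k : Fin m,
      (zeta e k v - zeta e k w) *
        ∫ t in (0:ℝ)..1,
          fderiv 𝕜 f (t • v + (1 - t) • w) (Pi.single k.succ 1) := by
  have hint := hf.intervalIntegrable_fderiv_segment_apply hΩ hconv hv hw
  calc f v - f w = ∫ t in (0 : ℝ)..1, fderiv 𝕜 f (t • v + (1 - t) • w) (v - w) :=
        hf.sub_eq_integral_fderiv_segment hΩ hconv hv hw
    _ = ∫ t in (0 : ℝ)..1, ∑ k : Fin m, (zeta e k v - zeta e k w) *
          fderiv 𝕜 f (t • v + (1 - t) • w) (Pi.single k.succ 1) :=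
        integral_congr fun t ht => (fderiv 𝕜 f _).toLinearMap.map_sub_eq_sum_zeta_sub_mul e
          (hD _ (hconv.smul_add_one_sub_smul_mem hv hw ht)) v w
    _ = _ := by
        rw [integral_finsetSum fun k _ => (hint _).const_mul _]
        refine Finset.sum_congr rfl fun k _ => ?_
        simpa only [smul_eq_mul] using (hint _).integral_smul (zeta e k v - zeta e k w)
end

section
/- For every multi-index α ∈ ℕ^m, the Fueter monomial v ↦ ζ(v)^α (the symmetrized product of α_1 copies of ζ_1(v), …, α_m copies of ζ_m(v)) is in the kernel of the Cauchy–Fueter operator: D(ζ^α) = 0 identically on 𝕂^{m+1}. More generally, for every fixed w ∈ 𝕂^{m+1} the shifted Fueter monomial v ↦ (ζ(v) − ζ(w))^α, the symmetrized product of α_k copies of ζ_k(v) − ζ_k(w), satisfies D((ζ − ζ(w))^α) = 0 identically; hence every Fueter polynomial (an A-linear combination Σ_α (ζ(v) − ζ(w))^α c_α with coefficients c_α ∈ A on the right) is in the kernel of D. -/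
/-- The Cauchy–Fueter operator `Df = ∂f/∂v_0 + ∑_k e_k ∂f/∂v_k`. -/
noncomputable def cauchyFueter (𝕜 : Type*) {A : Type*} [RCLike 𝕜] [NormedRing A]
    [NormedAlgebra 𝕜 A] {m : ℕ} (e : Fin m → A)
    (f : (Fin (m + 1) → 𝕜) → A) (v : Fin (m + 1) → 𝕜) : A :=
  fderiv 𝕜 f v (Pi.single 0 1) + ∑ k : Fin m, e k * fderiv 𝕜 f v (Pi.single k.succ 1)


/-!
Polarization writes the symmetrized product of `N` elements as the alternating sum, over
subsets `S`, of `(∑_{i ∈ S} aᵢ)^N`. For `aᵢ = ζ_{wᵢ}` the sum `Z = ∑_{i ∈ S} ζ_{wᵢ}` is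
`x(u)·1 − u₀·E` with `E = ∑_{i ∈ S} e_{wᵢ}` and a scalar `x(u)`, so all values of `Z` commute
with `E`; the Cauchy–Fueter operator sends `Z^N` to `∑ [E, Z^a] Z^b = 0`. Shifted monomials
follow by translation invariance and Fueter polynomials by right `A`-linearity of `D`.
-/

open Finset

section Polarization
variable {R : Type*} [Ring R]

theorem sum_pow_eq_sum_prod_ofFn_s4 {ι : Type*} [Fintype ι] (b : ι → R) :
    ∀ n : ℕ, (∑ i, b i) ^ n = ∑ f : Fin n → ι, (List.ofFn fun j => b (f j)).prod
  | 0 => by simp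
  | n + 1 => by
    rw [pow_succ', sum_pow_eq_sum_prod_ofFn_s4 b n, Finset.sum_mul_sum,
      ← (Fin.consEquiv fun _ => ι).sum_comp, Fintype.sum_prod_type]
    simp [List.ofFn_succ, Fin.consEquiv]

theorem sum_superset_neg_one_pow_card_compl {α : Type*} [Fintype α] [DecidableEq α]
    (T : Finset α) : ∑ S with T ⊆ S, (-1 : ℤ) ^ #Sᶜ = if T = univ then 1 else 0 := by
  simp_rw [← compl_eq_empty_iff T, ← sum_powerset_neg_one_pow_card]
  refine sum_nbij' compl compl (fun S hS => ?_) (fun S hS => ?_) (fun S _ => compl_compl S)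
    (fun S _ => compl_compl S) (fun S _ => rfl)
  · simpa using (mem_filter.1 hS).2
  · simpa [subset_compl_comm] using hS

theorem sum_surjective_prod_ofFn {N : ℕ} (a : Fin N → R) :
    ∑ f : Fin N → Fin N with f.Surjective, (List.ofFn fun j => a (f j)).prod =
      ∑ σ : Equiv.Perm (Fin N), (List.ofFn fun j => a (σ j)).prod := by
  symm
  refine sum_bij (fun σ _ => ⇑σ) (fun σ _ => by simpa using σ.surjective)
    (fun σ _ τ _ h => Equiv.ext (congrFun h)) (fun f hf => ?_) (fun σ _ => rfl)
  have hf : f.Surjective := (mem_filter.1 hf).2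
  exact ⟨Equiv.ofBijective f ⟨Finite.injective_iff_surjective.2 hf, hf⟩, mem_univ _, rfl⟩

theorem prod_ofFn_ite_mem {ι : Type*} [DecidableEq ι] {N : ℕ} (a : ι → R) (S : Finset ι)
    (f : Fin N → ι) :
    (List.ofFn fun j => if f j ∈ S then a (f j) else 0).prod =
      if univ.image f ⊆ S then (List.ofFn fun j => a (f j)).prod else 0 := by
  split_ifs with h
  · simp_rw [if_pos (h (mem_image_of_mem f (mem_univ _)))]
  · obtain ⟨_, hx, hxS⟩ := not_subset.1 h
    obtain ⟨j, -, rfl⟩ := mem_image.1 hx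
    exact List.prod_eq_zero (List.mem_ofFn.2 ⟨j, if_neg hxS⟩)

theorem sum_perm_prod_ofFn_eq_sum_pow {N : ℕ} (a : Fin N → R) :
    ∑ σ : Equiv.Perm (Fin N), (List.ofFn fun j => a (σ j)).prod =
      ∑ S : Finset (Fin N), (-1 : ℤ) ^ #Sᶜ • (∑ i ∈ S, a i) ^ N := by
  symm
  calc ∑ S : Finset (Fin N), (-1 : ℤ) ^ #Sᶜ • (∑ i ∈ S, a i) ^ N
      = ∑ f : Fin N → Fin N, ∑ S : Finset (Fin N), (-1 : ℤ) ^ #Sᶜ •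
          if univ.image f ⊆ S then (List.ofFn fun j => a (f j)).prod else 0 := by
        rw [sum_comm]
        refine sum_congr rfl fun S _ => ?_
        rw [← Fintype.sum_ite_mem, sum_pow_eq_sum_prod_ofFn_s4, smul_sum]
        exact sum_congr rfl fun f _ => by rw [prod_ofFn_ite_mem]
    _ = ∑ f : Fin N → Fin N with f.Surjective, (List.ofFn fun j => a (f j)).prod := by
        rw [sum_filter]
        refine sum_congr rfl fun f _ => ?_
        simp only [smul_ite, smul_zero]
        rw [← sum_filter, ← sum_smul, sum_superset_neg_one_pow_card_compl]
        rw [ite_smul, one_smul, zero_smul]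
        exact if_congr (by simp [eq_univ_iff_forall, Function.Surjective]) rfl rfl
    _ = _ := sum_surjective_prod_ofFn a

end Polarization

section CauchyFueter
variable {𝕜 A : Type*} [RCLike 𝕜] [NormedRing A] [NormedAlgebra 𝕜 A] {m : ℕ}

theorem cauchyFueter_add {e : Fin m → A} {f g : (Fin (m + 1) → 𝕜) → A} {v : Fin (m + 1) → 𝕜}
    (hf : DifferentiableAt 𝕜 f v) (hg : DifferentiableAt 𝕜 g v) :
    cauchyFueter 𝕜 e (f + g) v = cauchyFueter 𝕜 e f v + cauchyFueter 𝕜 e g v := by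
  simp only [cauchyFueter, fderiv_add hf hg, add_apply, mul_add, sum_add_distrib]
  abel

theorem cauchyFueter_const_smul {e : Fin m → A} {f : (Fin (m + 1) → 𝕜) → A}
    {v : Fin (m + 1) → 𝕜} (hf : DifferentiableAt 𝕜 f v) (r : 𝕜) :
    cauchyFueter 𝕜 e (r • f) v = r • cauchyFueter 𝕜 e f v := by
  simp only [cauchyFueter, fderiv_const_smul hf, smul_apply, mul_smul_comm, smul_add, smul_sum]

theorem cauchyFueter_mul_const {e : Fin m → A} {f : (Fin (m + 1) → 𝕜) → A}
    {v : Fin (m + 1) → 𝕜} (hf : DifferentiableAt 𝕜 f v) (c : A) :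
    cauchyFueter 𝕜 e (fun u => f u * c) v = cauchyFueter 𝕜 e f v * c := by
  simp only [cauchyFueter, fderiv_mul_const' hf, add_mul, sum_mul, mul_assoc]
  rfl

theorem cauchyFueter_comp_sub (e : Fin m → A) (f : (Fin (m + 1) → 𝕜) → A)
    (v w : Fin (m + 1) → 𝕜) :
    cauchyFueter 𝕜 e (fun u => f (u - w)) v = cauchyFueter 𝕜 e f (v - w) := by
  simp only [cauchyFueter, fderiv_comp_sub]

theorem HasFDerivAt.cauchyFueter_eq {e : Fin m → A} {f : (Fin (m + 1) → 𝕜) → A}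
    {L : (Fin (m + 1) → 𝕜) →L[𝕜] A} {v : Fin (m + 1) → 𝕜} (hf : HasFDerivAt f L v) :
    cauchyFueter 𝕜 e f v = L (Pi.single 0 1) + ∑ k, e k * L (Pi.single k.succ 1) := by
  rw [cauchyFueter, hf.fderiv]

-- Differentiability at `v` is part of membership: off it `fderiv` is junk and `D` is not additive.
variable (𝕜) in
def cauchyFueterKerAt (e : Fin m → A) (v : Fin (m + 1) → 𝕜) :
    Submodule 𝕜 ((Fin (m + 1) → 𝕜) → A) where
  carrier := {f | DifferentiableAt 𝕜 f v ∧ cauchyFueter 𝕜 e f v = 0}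
  add_mem' := fun ⟨hf, hDf⟩ ⟨hg, hDg⟩ =>
    ⟨hf.add hg, by rw [cauchyFueter_add hf hg, hDf, hDg, add_zero]⟩
  zero_mem' := ⟨differentiableAt_const 0, by simp [cauchyFueter]⟩
  smul_mem' r _ := fun ⟨hf, hDf⟩ =>
    ⟨hf.const_smul r, by rw [cauchyFueter_const_smul hf, hDf, smul_zero]⟩

theorem mul_const_mem_cauchyFueterKerAt {e : Fin m → A} {v : Fin (m + 1) → 𝕜}
    {f : (Fin (m + 1) → 𝕜) → A} (hf : f ∈ cauchyFueterKerAt 𝕜 e v) (c : A) :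
    (fun u => f u * c) ∈ cauchyFueterKerAt 𝕜 e v :=
  ⟨hf.1.mul_const c, by rw [cauchyFueter_mul_const hf.1, hf.2, zero_mul]⟩

theorem comp_sub_mem_cauchyFueterKerAt {e : Fin m → A} {v w : Fin (m + 1) → 𝕜}
    {f : (Fin (m + 1) → 𝕜) → A} (hf : f ∈ cauchyFueterKerAt 𝕜 e (v - w)) :
    (fun u => f (u - w)) ∈ cauchyFueterKerAt 𝕜 e v :=
  ⟨(differentiableAt_comp_sub w).2 hf.1, by rw [cauchyFueter_comp_sub, hf.2]⟩

end CauchyFueter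

section FueterVariables
variable {𝕜 A : Type*} [CommRing 𝕜] [Ring A] [Algebra 𝕜 A] {m : ℕ}

theorem zeta_single_zero (e : Fin m → A) (k : Fin m) :
    zeta e k (Pi.single 0 1 : Fin (m + 1) → 𝕜) = -e k := by
  simp [zeta, Fin.succ_ne_zero]

theorem zeta_single_succ (e : Fin m → A) (k j : Fin m) :
    zeta e k (Pi.single j.succ 1 : Fin (m + 1) → 𝕜) = if j = k then 1 else 0 := by
  simp [zeta, Pi.single_apply, (Fin.succ_ne_zero j).symm, eq_comm]

theorem zeta_sub (e : Fin m → A) (k : Fin m) (u w : Fin (m + 1) → 𝕜) :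
    zeta e k (u - w) = zeta e k u - zeta e k w := by
  simp only [zeta, Pi.sub_apply, sub_smul]
  abel

-- With `X`, `Y` held constant, `D` sends `X ζ_k Y` to `[e_k, X] Y`.
theorem mul_zeta_single_add_sum_mul_zeta_single (e : Fin m → A) (k : Fin m) (X Y : A) :
    X * zeta e k (Pi.single 0 1 : Fin (m + 1) → 𝕜) * Y +
        ∑ j, e j * (X * zeta e k (Pi.single j.succ 1 : Fin (m + 1) → 𝕜) * Y) =
      (e k * X - X * e k) * Y := by
  simp [zeta_single_zero, zeta_single_succ, sub_mul, mul_assoc]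
  abel

theorem mul_sum_zeta_single_add_sum_mul_sum_zeta_single {ι : Type*} (e : Fin m → A)
    (w : ι → Fin m) (S : Finset ι) (X Y : A) :
    X * (∑ i ∈ S, zeta e (w i) (Pi.single 0 1 : Fin (m + 1) → 𝕜)) * Y +
        ∑ j, e j * (X * (∑ i ∈ S, zeta e (w i) (Pi.single j.succ 1 : Fin (m + 1) → 𝕜)) * Y) =
      ((∑ i ∈ S, e (w i)) * X - X * ∑ i ∈ S, e (w i)) * Y := by
  simp only [mul_sum, sum_mul]
  rw [sum_comm, ← sum_add_distrib, ← sum_sub_distrib, sum_mul]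
  exact sum_congr rfl fun i _ => mul_zeta_single_add_sum_mul_zeta_single e (w i) X Y

theorem sum_zeta_eq {ι : Type*} (e : Fin m → A) (w : ι → Fin m) (S : Finset ι)
    (u : Fin (m + 1) → 𝕜) :
    ∑ i ∈ S, zeta e (w i) u = (∑ i ∈ S, u (w i).succ) • 1 - u 0 • ∑ i ∈ S, e (w i) := by
  simp only [zeta, sum_sub_distrib, sum_smul, smul_sum]

theorem commute_sum_sum_zeta {ι : Type*} (e : Fin m → A) (w : ι → Fin m) (S : Finset ι)
    (u : Fin (m + 1) → 𝕜) :
    Commute (∑ i ∈ S, e (w i)) (∑ i ∈ S, zeta e (w i) u) := by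
  rw [sum_zeta_eq]
  exact ((Commute.one_right _).smul_right _).sub_right ((Commute.refl _).smul_right _)

end FueterVariables

section FueterKernel
variable {𝕜 A : Type*} [RCLike 𝕜] [NormedRing A] [NormedAlgebra 𝕜 A] {m : ℕ}

variable (𝕜) in
def zetaCLM (e : Fin m → A) (k : Fin m) : (Fin (m + 1) → 𝕜) →L[𝕜] A :=
  (ContinuousLinearMap.proj k.succ).smulRight 1 - (ContinuousLinearMap.proj 0).smulRight (e k)

@[simp]
theorem zetaCLM_apply (e : Fin m → A) (k : Fin m) (u : Fin (m + 1) → 𝕜) :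
    zetaCLM 𝕜 e k u = zeta e k u :=
  rfl

theorem pow_sum_zeta_mem_cauchyFueterKerAt {ι : Type*} (e : Fin m → A) (w : ι → Fin m)
    (S : Finset ι) (n : ℕ) (v : Fin (m + 1) → 𝕜) :
    (fun u => (∑ i ∈ S, zeta e (w i) u) ^ n) ∈ cauchyFueterKerAt 𝕜 e v := by
  have hZ : HasFDerivAt (fun u => ∑ i ∈ S, zeta e (w i) u) (∑ i ∈ S, zetaCLM 𝕜 e (w i)) v :=
    HasFDerivAt.fun_sum fun i _ => (zetaCLM 𝕜 e (w i)).hasFDerivAt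
  have hZn := hZ.fun_pow' n
  refine ⟨hZn.differentiableAt, ?_⟩
  show cauchyFueter 𝕜 e _ v = 0
  rw [hZn.cauchyFueter_eq]
  simp only [_root_.sum_apply, smul_apply, zetaCLM_apply, op_smul_eq_mul, smul_eq_mul,
    mul_sum (range n)]
  rw [sum_comm, ← sum_add_distrib]
  refine sum_eq_zero fun i _ => ?_
  rw [mul_sum_zeta_single_add_sum_mul_sum_zeta_single,
    ((commute_sum_sum_zeta e w S v).pow_right _).eq, sub_self, zero_mul]

end FueterKernel

section SymmetrizedProducts
variable {𝕜 A : Type*} [Field 𝕜] [Ring A] [Algebra 𝕜 A]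

theorem symProd_eq_sum_pow {n : ℕ} (l : List A) (a : Fin n → A) (hl : l.length = n)
    (ha : ∀ i, l.get (i.cast hl.symm) = a i) :
    symProd 𝕜 l =
      (n.factorial : 𝕜)⁻¹ • ∑ S : Finset (Fin n), (-1 : ℤ) ^ #Sᶜ • (∑ i ∈ S, a i) ^ n := by
  subst hl
  rw [symProd, ← sum_perm_prod_ofFn_eq_sum_pow]
  simp only [← ha]
  rfl

def multiIndexList {m : ℕ} (α : Fin m → ℕ) : List (Fin m) :=
  (List.finRange m).flatMap fun i => List.replicate (α i) i

theorem symPow_eq_sum_pow {m : ℕ} (a : Fin m → A) (α : Fin m → ℕ) :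
    symPow 𝕜 a α = ((multiIndexList α).length.factorial : 𝕜)⁻¹ •
      ∑ S : Finset (Fin (multiIndexList α).length),
        (-1 : ℤ) ^ #Sᶜ • (∑ i ∈ S, a ((multiIndexList α).get i)) ^ (multiIndexList α).length := by
  have hmap : (List.finRange m).flatMap (fun i => List.replicate (α i) (a i)) =
      (multiIndexList α).map a := by
    simp [multiIndexList, List.map_flatMap, List.map_replicate]
  rw [symPow, hmap]
  exact symProd_eq_sum_pow _ _ (List.length_map _) fun i => by simp

end SymmetrizedProducts

section FueterMonomials
variable {𝕜 A : Type*} [RCLike 𝕜] [NormedRing A] [NormedAlgebra 𝕜 A] {m : ℕ}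

theorem symPow_zeta_mem_cauchyFueterKerAt (e : Fin m → A) (α : Fin m → ℕ)
    (v : Fin (m + 1) → 𝕜) :
    (fun u => symPow 𝕜 (fun k => zeta e k u) α) ∈ cauchyFueterKerAt 𝕜 e v := by
  set w := (multiIndexList α).get
  have hpolar : (fun u : Fin (m + 1) → 𝕜 => symPow 𝕜 (fun k => zeta e k u) α) =
      ((multiIndexList α).length.factorial : 𝕜)⁻¹ • ∑ S : Finset (Fin (multiIndexList α).length),
        (-1 : ℤ) ^ #Sᶜ • fun u => (∑ i ∈ S, zeta e (w i) u) ^ (multiIndexList α).length := by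
    ext u
    simp only [symPow_eq_sum_pow, Pi.smul_apply, Finset.sum_apply]
    rfl
  rw [hpolar]
  exact Submodule.smul_mem _ _ <| Submodule.sum_mem _ fun S _ =>
    zsmul_mem (pow_sum_zeta_mem_cauchyFueterKerAt e w S _ v) _

theorem symPow_zeta_sub_mem_cauchyFueterKerAt (e : Fin m → A) (w : Fin (m + 1) → 𝕜)
    (α : Fin m → ℕ) (v : Fin (m + 1) → 𝕜) :
    (fun u => symPow 𝕜 (fun k => zeta e k u - zeta e k w) α) ∈ cauchyFueterKerAt 𝕜 e v := by
  simp_rw [← zeta_sub (𝕜 := 𝕜)]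
  exact comp_sub_mem_cauchyFueterKerAt (symPow_zeta_mem_cauchyFueterKerAt e α (v - w))

end FueterMonomials

/-- Fueter monomials `ζ^α`, shifted Fueter monomials `(ζ − ζ(w))^α`, and
Fueter polynomials `∑_α (ζ − ζ(w))^α c_α` are all in the kernel of the
Cauchy–Fueter operator. -/
theorem stmt4 {𝕜 A : Type*} [RCLike 𝕜] [NormedRing A] [NormedAlgebra 𝕜 A] {m : ℕ}
    (e : Fin m → A) :
    (∀ (α : Fin m → ℕ) (v : Fin (m + 1) → 𝕜),
      cauchyFueter 𝕜 e (fun u => symPow 𝕜 (fun k => zeta e k u) α) v = 0) ∧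
    (∀ (w : Fin (m + 1) → 𝕜) (α : Fin m → ℕ) (v : Fin (m + 1) → 𝕜),
      cauchyFueter 𝕜 e (fun u => symPow 𝕜 (fun k => zeta e k u - zeta e k w) α) v = 0) ∧
    (∀ (w : Fin (m + 1) → 𝕜) (S : Finset (Fin m → ℕ)) (c : (Fin m → ℕ) → A)
        (v : Fin (m + 1) → 𝕜),
      cauchyFueter 𝕜 e
        (fun u => ∑ α ∈ S, symPow 𝕜 (fun k => zeta e k u - zeta e k w) α * c α) v = 0) := by
  refine ⟨fun α v => (symPow_zeta_mem_cauchyFueterKerAt e α v).2,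
    fun w α v => (symPow_zeta_sub_mem_cauchyFueterKerAt e w α v).2, fun w S c v => ?_⟩
  have hsum := Submodule.sum_mem (cauchyFueterKerAt 𝕜 e v) fun α (_ : α ∈ S) =>
    mul_const_mem_cauchyFueterKerAt (symPow_zeta_sub_mem_cauchyFueterKerAt e w α v) (c α)
  simpa only [Finset.sum_fn] using hsum.2
end

section
/- Let A be a (possibly noncommutative) unital ring, and let A_k ∈ A^{n×n}, B_k ∈ A^{n×p} (k = 1, …, m), C ∈ A^{p×n}, D ∈ A^{p×p} be matrices with entries in A, with D invertible in A^{p×p}. View all matrices as matrices with entries in the ring of formal power series in m commuting variables X_1, …, X_m over A. Then the matrix 1_n − Σ_{k=1}^m X_k A_k is invertible, the matrix R = D + C·(1_n − Σ_{k=1}^m X_k A_k)^{-1}·(Σ_{k=1}^m X_k B_k) is invertible, and its inverse is R^{-1} = D^{-1} − D^{-1} C·(1_n − Σ_{k=1}^m X_k A_k^□)^{-1}·(Σ_{k=1}^m X_k B_k)·D^{-1}, where A_k^□ = A_k − B_k D^{-1} C. -/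
/-!
Matrices over `MvPowerSeries σ R` are power series with matrix coefficients, so a square
matrix of power series is invertible as soon as its constant coefficient is; this makes
`1 − ∑ X_k A_k` and `1 − ∑ X_k A_k^□` invertible. The inversion formula is then a pure ring
identity: with `U = 1 − ∑ X_k A_k`, `U' = 1 − ∑ X_k A_k^□` and `V = ∑ X_k B_k` one has
`U' − U = V D⁻¹ C`, and the resolvent identity `U⁻¹ − U'⁻¹ = U⁻¹ (U' − U) U'⁻¹` shows that
`D⁻¹ − D⁻¹ C U'⁻¹ V D⁻¹` is a two-sided inverse of `D + C U⁻¹ V`.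
-/

/-- Entrywise embedding of a constant matrix over `A` into matrices over the ring of
formal power series in `m` commuting variables over `A`. -/
noncomputable def matC {A : Type*} [Ring A] (m : ℕ) {κ ι : Type*} (M : Matrix κ ι A) :
    Matrix κ ι (MvPowerSeries (Fin m) A) :=
  M.map (MvPowerSeries.C : A →+* MvPowerSeries (Fin m) A)

/-- `X_k · M`, the constant matrix `M` multiplied by the `k`-th formal variable. -/
noncomputable def xMul {A : Type*} [Ring A] {m : ℕ} (k : Fin m) {κ ι : Type*}
    (M : Matrix κ ι A) : Matrix κ ι (MvPowerSeries (Fin m) A) :=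
  (MvPowerSeries.X k : MvPowerSeries (Fin m) A) • matC m M

open MvPowerSeries

section InverseOfRealization

variable {T n p : Type*} [Ring T] [Fintype n] [Fintype p] [DecidableEq n] [DecidableEq p]
  {U U' : Matrix n n T} {V : Matrix n p T} {C : Matrix p n T} {D E : Matrix p p T}

theorem add_mul_inverse_mul_mul_sub_eq_one (hU : IsUnit U ↔ IsUnit U')
    (hDE : D * E = 1) (hUU' : U' - U = V * E * C) :
    (D + C * Ring.inverse U * V) * (E - E * C * Ring.inverse U' * V * E) = 1 := by
  have resolvent : Ring.inverse U * (V * (E * (C * Ring.inverse U'))) =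
      Ring.inverse U - Ring.inverse U' := by
    rw [Ring.inverse_sub_inverse hU, hUU']
    simp only [Matrix.mul_assoc]
  calc (D + C * Ring.inverse U * V) * (E - E * C * Ring.inverse U' * V * E)
      = D * E - D * E * (C * Ring.inverse U' * V * E) + C * Ring.inverse U * V * E -
          C * (Ring.inverse U * (V * (E * (C * Ring.inverse U')))) * V * E := by
        simp only [Matrix.add_mul, Matrix.mul_sub, Matrix.mul_assoc]
        abel
    _ = 1 := by
        rw [resolvent, hDE]
        simp only [Matrix.one_mul, Matrix.mul_sub, Matrix.sub_mul, Matrix.mul_assoc]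
        abel

theorem sub_mul_add_mul_inverse_mul_eq_one (hU : IsUnit U ↔ IsUnit U')
    (hED : E * D = 1) (hUU' : U' - U = V * E * C) :
    (E - E * C * Ring.inverse U' * V * E) * (D + C * Ring.inverse U * V) = 1 := by
  have resolvent : Ring.inverse U' * (V * (E * (C * Ring.inverse U))) =
      Ring.inverse U - Ring.inverse U' := by
    rw [← neg_sub (Ring.inverse U'), Ring.inverse_sub_inverse hU.symm, ← neg_sub U', hUU']
    simp only [Matrix.mul_neg, Matrix.neg_mul, neg_neg, Matrix.mul_assoc]
  calc (E - E * C * Ring.inverse U' * V * E) * (D + C * Ring.inverse U * V)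
      = E * D + E * C * Ring.inverse U * V - E * C * Ring.inverse U' * V * (E * D) -
          E * C * (Ring.inverse U' * (V * (E * (C * Ring.inverse U)))) * V := by
        simp only [Matrix.mul_add, Matrix.sub_mul, Matrix.mul_assoc]
        abel
    _ = 1 := by
        rw [resolvent, hED, Matrix.mul_one]
        simp only [Matrix.mul_sub, Matrix.sub_mul, Matrix.mul_assoc]
        abel

theorem isUnit_add_mul_inverse_mul_and_inverse_eq (hU : IsUnit U ↔ IsUnit U')
    (hDE : D * E = 1) (hED : E * D = 1) (hUU' : U' - U = V * E * C) :
    IsUnit (D + C * Ring.inverse U * V) ∧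
      Ring.inverse (D + C * Ring.inverse U * V) = E - E * C * Ring.inverse U' * V * E :=
  let R : (Matrix p p T)ˣ := ⟨_, _, add_mul_inverse_mul_mul_sub_eq_one hU hDE hUU',
    sub_mul_add_mul_inverse_mul_eq_one hU hED hUU'⟩
  ⟨R.isUnit, Ring.inverse_unit R⟩

end InverseOfRealization

namespace Matrix

variable {σ R ι : Type*} [Ring R] [Fintype ι] [DecidableEq ι]

def mvPowerSeriesEquiv : Matrix ι ι (MvPowerSeries σ R) ≃+* MvPowerSeries σ (Matrix ι ι R) where
  toFun M d := of fun i j => coeff d (M i j)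
  invFun φ := of fun i j => (fun d => φ d i j : MvPowerSeries σ R)
  left_inv _ := rfl
  right_inv _ := rfl
  map_add' _ _ := rfl
  map_mul' M N := by
    classical
    refine MvPowerSeries.ext fun d => ext fun i j => ?_
    change coeff d (∑ k, M i k * N k j) =
      (coeff d (_ * _ : MvPowerSeries σ (Matrix ι ι R)) : Matrix ι ι R) i j
    erw [coeff_mul]
    simp only [map_sum, coeff_mul, sum_apply, mul_apply]
    exact Finset.sum_comm

theorem isUnit_of_isUnit_map_constantCoeff {M : Matrix ι ι (MvPowerSeries σ R)}
    (h : IsUnit (M.map constantCoeff)) : IsUnit M :=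
  (MulEquiv.isUnit_map (mvPowerSeriesEquiv : Matrix ι ι (MvPowerSeries σ R) ≃+* _)).mp
    (isUnit_iff_constantCoeff.mpr h)

end Matrix

section ConstantMatrices

variable {A : Type*} [Ring A] {m : ℕ}

theorem matC_mul {κ ι τ : Type*} [Fintype ι] (M : Matrix κ ι A) (N : Matrix ι τ A) :
    matC m (M * N) = matC m M * matC m N :=
  Matrix.map_mul

theorem matC_one {κ : Type*} [Fintype κ] [DecidableEq κ] : matC m (1 : Matrix κ κ A) = 1 :=
  Matrix.map_one _ (map_zero _) (map_one _)

theorem xMul_mul (k : Fin m) {κ ι τ : Type*} [Fintype ι] (M : Matrix κ ι A) (N : Matrix ι τ A) :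
    xMul k (M * N) = xMul k M * matC m N := by
  rw [xMul, xMul, matC_mul, Matrix.smul_mul]

theorem xMul_sub (k : Fin m) {κ ι : Type*} (M N : Matrix κ ι A) :
    xMul k (M - N) = xMul k M - xMul k N := by
  rw [xMul, xMul, xMul, matC, matC, matC, Matrix.map_sub _ (map_sub _), smul_sub]

theorem isUnit_one_sub_sum_xMul {κ : Type*} [Fintype κ] [DecidableEq κ]
    (M : Fin m → Matrix κ κ A) : IsUnit (1 - ∑ k, xMul k (M k)) := by
  apply Matrix.isUnit_of_isUnit_map_constantCoeff
  convert isUnit_one using 1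
  ext i j
  simp [xMul, matC, Matrix.one_apply, Matrix.sum_apply]

end ConstantMatrices

/-- Inversion of a realization: if `D` is invertible, then
`R = D + C (1 − ∑ X_k A_k)⁻¹ (∑ X_k B_k)` is invertible with inverse
`R⁻¹ = D⁻¹ − D⁻¹ C (1 − ∑ X_k A_k^□)⁻¹ (∑ X_k B_k) D⁻¹`, where
`A_k^□ = A_k − B_k D⁻¹ C`. -/
theorem stmt10 {A : Type*} [Ring A] {m n p : ℕ}
    (Ak : Fin m → Matrix (Fin n) (Fin n) A) (Bk : Fin m → Matrix (Fin n) (Fin p) A)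
    (C : Matrix (Fin p) (Fin n) A) (D : Matrix (Fin p) (Fin p) A)
    (hD : IsUnit D) :
    IsUnit ((1 : Matrix (Fin n) (Fin n) (MvPowerSeries (Fin m) A)) -
        ∑ k, xMul k (Ak k)) ∧
    IsUnit (matC m D + matC m C *
        Ring.inverse ((1 : Matrix (Fin n) (Fin n) (MvPowerSeries (Fin m) A)) -
          ∑ k, xMul k (Ak k)) *
        (∑ k, xMul k (Bk k))) ∧
    Ring.inverse (matC m D + matC m C *
        Ring.inverse ((1 : Matrix (Fin n) (Fin n) (MvPowerSeries (Fin m) A)) -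
          ∑ k, xMul k (Ak k)) *
        (∑ k, xMul k (Bk k)))
      = matC m (Ring.inverse D) -
          matC m (Ring.inverse D) * matC m C *
            Ring.inverse ((1 : Matrix (Fin n) (Fin n) (MvPowerSeries (Fin m) A)) -
              ∑ k, xMul k (Ak k - Bk k * Ring.inverse D * C)) *
            (∑ k, xMul k (Bk k)) * matC m (Ring.inverse D) := by
  have hU := isUnit_one_sub_sum_xMul Ak
  have hU' := isUnit_one_sub_sum_xMul fun k => Ak k - Bk k * Ring.inverse D * C
  have hDE : matC m D * matC m (Ring.inverse D) = 1 := by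
    rw [← matC_mul, Ring.mul_inverse_cancel D hD, matC_one]
  have hED : matC m (Ring.inverse D) * matC m D = 1 := by
    rw [← matC_mul, Ring.inverse_mul_cancel D hD, matC_one]
  have hUU' : (1 - ∑ k, xMul k (Ak k - Bk k * Ring.inverse D * C)) - (1 - ∑ k, xMul k (Ak k)) =
      (∑ k, xMul k (Bk k)) * matC m (Ring.inverse D) * matC m C := by
    simp only [xMul_sub, xMul_mul, Finset.sum_sub_distrib, Matrix.sum_mul]
    abel
  exact ⟨hU, isUnit_add_mul_inverse_mul_and_inverse_eq (iff_of_true hU hU') hDE hED hUU'⟩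
end

section
/- Let c = (c_α)_{α ∈ ℕ^m} be a family of nonzero real numbers, let b ∈ A, and fix ξ ∈ A^m. Define the coefficient family of K_c(·, ξ)b by g_α = (ξ^α)† b / c_α, where ξ^α is the symmetrized product of α_1 copies of ξ_1, …, α_m copies of ξ_m. Let f = (f_α)_{α ∈ ℕ^m} be a family in A such that both (c_α g_α† f_α)_α and (ξ^α f_α)_α are absolutely summable in A. Then the reproducing property holds: [f, K_c(·, ξ)b] = Σ_{α ∈ ℕ^m} c_α · g_α† f_α = b† · (Σ_{α ∈ ℕ^m} ξ^α f_α) = b† f(ξ). -/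
theorem smul_star_inv_smul_star_mul_mul {A : Type*} [Ring A] [StarRing A] [Algebra ℝ A]
    [StarModule ℝ A] {c : ℝ} (hc : c ≠ 0) (x b y : A) :
    c • (star (c⁻¹ • (star x * b)) * y) = star b * (x * y) := by
  rw [star_smul, star_mul, star_star, star_trivial, smul_mul_assoc, smul_smul,
    mul_inv_cancel₀ hc, one_smul, mul_assoc]

theorem stmt15_general {A : Type*} [NormedRing A] [NormedAlgebra ℝ A] [StarRing A]
    [StarModule ℝ A] [CompleteSpace A] {m : ℕ}
    (c : (Fin m → ℕ) → ℝ) (hc : ∀ α, c α ≠ 0)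
    (b : A) (ξ : Fin m → A)
    (g : (Fin m → ℕ) → A)
    (hg : ∀ α, g α = (c α)⁻¹ • (star (symPow ℝ ξ α) * b))
    (f : (Fin m → ℕ) → A)
    (h2 : Summable fun α => ‖symPow ℝ ξ α * f α‖) :
    ∑' α, c α • (star (g α) * f α) = star b * ∑' α, symPow ℝ ξ α * f α :=
  calc ∑' α, c α • (star (g α) * f α)
      = ∑' α, star b * (symPow ℝ ξ α * f α) :=
        tsum_congr fun α => by rw [hg α, smul_star_inv_smul_star_mul_mul (hc α)]
    _ = star b * ∑' α, symPow ℝ ξ α * f α := h2.of_norm.tsum_mul_left _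

/-- The reproducing property: for the coefficient family `g_α = (ξ^α)† b / c_α` of
`K_c(·,ξ)b`, one has `[f, K_c(·,ξ)b] = ∑_α c_α g_α† f_α = b† ∑_α ξ^α f_α = b† f(ξ)`. -/
theorem stmt15 {A : Type*} [NormedRing A] [NormedAlgebra ℝ A] [StarRing A]
    [NormedStarGroup A] [StarModule ℝ A] [CompleteSpace A] {m : ℕ}
    (c : (Fin m → ℕ) → ℝ) (hc : ∀ α, c α ≠ 0)
    (b : A) (ξ : Fin m → A)
    (g : (Fin m → ℕ) → A)
    (hg : ∀ α, g α = (c α)⁻¹ • (star (symPow ℝ ξ α) * b))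
    (f : (Fin m → ℕ) → A)
    (h1 : Summable fun α => ‖c α • (star (g α) * f α)‖)
    (h2 : Summable fun α => ‖symPow ℝ ξ α * f α‖) :
    ∑' α, c α • (star (g α) * f α) = star b * ∑' α, symPow ℝ ξ α * f α :=
  stmt15_general c hc b ξ g hg f h2
end

section
/- Take the Drury–Arveson weights c_α = α!/|α|! (with c_0 = 1), and fix k ∈ {1, …, m}. Let f = (f_α)_{α ∈ ℕ^m} be a family in A with Σ_α c_α N(f_α)² < ∞, and define the shift (M_{ζ_k} f)_β = f_{β − ι_k} if β_k ≥ 1 and 0 otherwise, where ι_k is the k-th unit multi-index. Then M_{ζ_k} f again satisfies Σ_β c_β N((M_{ζ_k}f)_β)² < ∞, and [f, f] − [M_{ζ_k} f, M_{ζ_k} f] = Σ_{α ∈ ℕ^m} ((|α| − α_k)/(|α| + 1)) · c_α · f_α† f_α = Σ_{α ∈ ℕ^m} (d_α f_α)† (d_α f_α), where d_α = √(c_α (|α| − α_k)/(|α| + 1)) ≥ 0; in particular [f, f] − [M_{ζ_k}f, M_{ζ_k}f] is a convergent sum of elements of the form a† a, so M_{ζ_k} is a contraction for the form [·,·]. 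-/
/-- The Drury–Arveson weights `c_α = α! / |α|!`. -/
noncomputable def daWeight {m : ℕ} (α : Fin m → ℕ) : ℝ :=
  (∏ i, ((α i).factorial : ℝ)) / ((∑ i, α i).factorial : ℝ)

/-!
Shifting in the direction `k` sends `α` to `α + ι_k` and multiplies the Drury–Arveson weight
by `(α_k + 1) / (|α| + 1) ≤ 1`. Hence `M_{ζ_k}` is bounded for the weighted norm, and after
reindexing `[M_{ζ_k} f, M_{ζ_k} f]` by `α ↦ α + ι_k` the defect `[f, f] - [M_{ζ_k} f, M_{ζ_k} f]`
is a termwise difference, with coefficient `c_α - c_{α + ι_k} = c_α (|α| - α_k) / (|α| + 1)`.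
-/

open Finset

section Weight

variable {m : ℕ}

lemma daWeight_nonneg (α : Fin m → ℕ) : 0 ≤ daWeight α := by
  unfold daWeight
  positivity

lemma prod_factorial_add_single (k : Fin m) (α : Fin m → ℕ) :
    ∏ i, (((α + Pi.single k 1 : Fin m → ℕ) i).factorial : ℝ)
      = ((α k : ℝ) + 1) * ∏ i, ((α i).factorial : ℝ) := by
  rw [← mul_prod_erase univ _ (mem_univ k), ← mul_prod_erase univ _ (mem_univ k),
    prod_congr rfl fun i hi => by rw [Pi.add_apply, Pi.single_eq_of_ne (ne_of_mem_erase hi),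
      add_zero]]
  simp only [Pi.add_apply, Pi.single_eq_same, Nat.factorial_succ]
  push_cast
  ring

lemma daWeight_add_single (k : Fin m) (α : Fin m → ℕ) :
    daWeight (α + Pi.single k 1)
      = daWeight α * (((α k : ℝ) + 1) / ((∑ i, α i : ℕ) + 1)) := by
  have hsum : ∑ i, (α + Pi.single k 1 : Fin m → ℕ) i = ∑ i, α i + 1 := by
    simp [sum_add_distrib]
  unfold daWeight
  rw [hsum, prod_factorial_add_single, Nat.factorial_succ]
  push_cast
  field_simp

lemma apply_le_sum (α : Fin m → ℕ) (k : Fin m) : α k ≤ ∑ i, α i :=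
  single_le_sum (fun _ _ => Nat.zero_le _) (mem_univ k)

lemma daWeight_add_single_le (k : Fin m) (α : Fin m → ℕ) :
    daWeight (α + Pi.single k 1) ≤ daWeight α := by
  rw [daWeight_add_single]
  refine mul_le_of_le_one_right (daWeight_nonneg α) ((div_le_one (by positivity)).mpr ?_)
  exact_mod_cast Nat.succ_le_succ (apply_le_sum α k)

lemma daWeight_sub_daWeight_add_single (k : Fin m) (α : Fin m → ℕ) :
    daWeight α - daWeight (α + Pi.single k 1)
      = (((∑ i, α i - α k : ℕ) : ℝ) / ((∑ i, α i + 1 : ℕ) : ℝ)) * daWeight α := by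
  rw [daWeight_add_single, Nat.cast_sub (apply_le_sum α k)]
  push_cast
  field_simp
  ring

end Weight

section Shift

variable {m : ℕ} {X : Type*} [Zero X] {k : Fin m} {f Mf : (Fin m → ℕ) → X}

lemma shift_apply_add_single
    (hMf : ∀ β, Mf β = if 1 ≤ β k then f (β - Pi.single k 1) else 0) (α : Fin m → ℕ) :
    Mf (α + Pi.single k 1) = f α := by
  simp [hMf]

lemma shift_eq_zero_of_notMem_range
    (hMf : ∀ β, Mf β = if 1 ≤ β k then f (β - Pi.single k 1) else 0) (β : Fin m → ℕ)
    (hβ : β ∉ Set.range (· + Pi.single k 1 : (Fin m → ℕ) → Fin m → ℕ)) :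
    Mf β = 0 := by
  rw [hMf, if_neg]
  intro hk
  refine hβ ⟨β - Pi.single k 1, funext fun i => ?_⟩
  rcases eq_or_ne i k with rfl | hik
  · simp [Nat.sub_add_cancel hk]
  · simp [Pi.single_eq_of_ne hik]

end Shift

lemma norm_star_mul_self_le_sq {A : Type*} [NormedRing A] [StarRing A] [NormedStarGroup A]
    (a : A) : ‖star a * a‖ ≤ ‖a‖ ^ 2 :=
  (norm_mul_le _ _).trans_eq (by rw [norm_star, sq])

lemma summable_smul_star_mul_self {A : Type*} [NormedRing A] [NormedAlgebra ℝ A] [StarRing A]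
    [NormedStarGroup A] [CompleteSpace A] {ι : Type*} {w : ι → ℝ} {f : ι → A}
    (hw : ∀ i, 0 ≤ w i) (hf : Summable fun i => w i * ‖f i‖ ^ 2) :
    Summable fun i => w i • (star (f i) * f i) :=
  hf.of_norm_bounded fun i => by
    rw [norm_smul, Real.norm_of_nonneg (hw i)]
    exact mul_le_mul_of_nonneg_left (norm_star_mul_self_le_sq _) (hw i)

lemma star_smul_mul_smul {A : Type*} [Ring A] [StarRing A] [Algebra ℝ A] [StarModule ℝ A]
    (r : ℝ) (a : A) : star (r • a) * (r • a) = (r * r) • (star a * a) := by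
  rw [star_smul, star_trivial, smul_mul_smul_comm]

/-- In the Drury–Arveson module, the shift `M_{ζ_k}` maps `W(c)` into itself and
`[f,f] − [M_{ζ_k}f, M_{ζ_k}f] = ∑_α ((|α|−α_k)/(|α|+1)) c_α f_α† f_α
  = ∑_α (d_α f_α)† (d_α f_α)` with `d_α = √(c_α(|α|−α_k)/(|α|+1))`;
in particular `M_{ζ_k}` is a contraction for the Hermitian form. -/
theorem stmt17 {A : Type*} [NormedRing A] [NormedAlgebra ℝ A] [StarRing A]
    [NormedStarGroup A] [StarModule ℝ A] [CompleteSpace A] {m : ℕ} (k : Fin m)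
    (f : (Fin m → ℕ) → A)
    (hf : Summable fun α => daWeight α * ‖f α‖ ^ 2)
    (Mf : (Fin m → ℕ) → A)
    (hMf : ∀ β, Mf β = if 1 ≤ β k then f (β - Pi.single k 1) else 0)
    (d : (Fin m → ℕ) → ℝ)
    (hd : ∀ α, d α = Real.sqrt (daWeight α *
      ((((∑ i, α i) - α k : ℕ) : ℝ) / (((∑ i, α i) + 1 : ℕ) : ℝ)))) :
    (Summable fun β => daWeight β * ‖Mf β‖ ^ 2) ∧
    ((∑' α, daWeight α • (star (f α) * f α)) -
        (∑' β, daWeight β • (star (Mf β) * Mf β))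
      = ∑' α, ((((∑ i, α i) - α k : ℕ) : ℝ) / (((∑ i, α i) + 1 : ℕ) : ℝ)) •
          (daWeight α • (star (f α) * f α))) ∧
    ((∑' α, daWeight α • (star (f α) * f α)) -
        (∑' β, daWeight β • (star (Mf β) * Mf β))
      = ∑' α, star (d α • f α) * (d α • f α)) := by
  have he : Function.Injective (· + Pi.single k 1 : (Fin m → ℕ) → Fin m → ℕ) :=
    add_left_injective _
  have hzero := shift_eq_zero_of_notMem_range hMf
  have hf' : Summable fun α => daWeight (α + Pi.single k 1) * ‖f α‖ ^ 2 :=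
    hf.of_nonneg_of_le (fun α => mul_nonneg (daWeight_nonneg _) (sq_nonneg _))
      fun α => mul_le_mul_of_nonneg_right (daWeight_add_single_le k α) (sq_nonneg _)
  have hMf_summable : Summable fun β => daWeight β * ‖Mf β‖ ^ 2 := by
    refine (he.summable_iff fun β hβ => by simp [hzero β hβ]).mp ?_
    simpa only [Function.comp_def, shift_apply_add_single hMf] using hf'
  have hMf_tsum : ∑' β, daWeight β • (star (Mf β) * Mf β)
      = ∑' α, daWeight (α + Pi.single k 1) • (star (f α) * f α) := by
    rw [← he.tsum_eq fun β hβ => by_contra fun h => hβ (by simp [hzero β h])]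
    simp only [shift_apply_add_single hMf]
  have hdefect : (∑' α, daWeight α • (star (f α) * f α)) -
        (∑' β, daWeight β • (star (Mf β) * Mf β))
      = ∑' α, ((((∑ i, α i) - α k : ℕ) : ℝ) / (((∑ i, α i) + 1 : ℕ) : ℝ)) •
          (daWeight α • (star (f α) * f α)) := by
    rw [hMf_tsum, ← (summable_smul_star_mul_self daWeight_nonneg hf).tsum_sub
      (summable_smul_star_mul_self (fun α => daWeight_nonneg _) hf')]
    simp only [← sub_smul, daWeight_sub_daWeight_add_single, mul_smul]
  refine ⟨hMf_summable, hdefect, hdefect.trans (tsum_congr fun α => ?_)⟩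
  rw [star_smul_mul_smul, hd, Real.mul_self_sqrt (mul_nonneg (daWeight_nonneg α) (by positivity)),
    smul_smul, mul_comm]
end
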